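/- arXiv:1001.5470 — 7 statements merged into one kernel-verified Lean document; each statement's English description precedes it below -/
import Mathlib

section
/- Let (A^ℤ, F) be a cellular automaton, Σ ⊆ A^ℤ a subshift, and h, k bounded-variation curves with h ∼ k. If F has an equicontinuous point along h relative to Σ, then F has an equicontinuous point along k relative to Σ; similarly if every point of Σ is equicontinuous along h then every point is equicontinuous along k. -/
open Classical

section Prelude

variable {A : Type*}

/-- The shift map on configurations. -/
def shift (x : ℤ → A) : ℤ → A := fun i => x (i + 1)

/-- The cylinder of the word `u` placed at position `p`. -/
def cylAt (u : List A) (p : ℤ) : Set (ℤ → A) :=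
  {x | ∀ i : Fin u.length, x (p + ((i : ℕ) : ℤ)) = u.get i}

/-- The region of consequences of a set of configurations. -/
def consSet (F : (ℤ → A) → (ℤ → A)) (X : Set (ℤ → A)) : Set (ℤ × ℕ) :=
  {q | ∀ x ∈ X, ∀ y ∈ X, F^[q.2] x q.1 = F^[q.2] y q.1}

/-- `F` is a cellular automaton with neighborhood `⟦r,s⟧`. -/
def IsCA (F : (ℤ → A) → (ℤ → A)) (r s : ℤ) : Prop :=
  (∀ x, F (shift x) = shift (F x)) ∧
  (∀ x y : ℤ → A, (∀ i : ℤ, r ≤ i → i ≤ s → x i = y i) → F x 0 = F y 0)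

/-- A subshift: a closed shift-invariant set. -/
def IsSubshift [TopologicalSpace A] (S : Set (ℤ → A)) : Prop :=
  IsClosed S ∧ shift '' S = S

/-- Two configurations agree on the centered window of radius `m`
(Cantor distance `< 2^{-m}`). -/
def close (m : ℕ) (x y : ℤ → A) : Prop := ∀ i : ℤ, |i| ≤ (m : ℤ) → x i = y i

/-- `y` is in the tube of radius `2^{-k}` along `h` around `x`:
for every time `n` the configurations `σ^{h n} ∘ F^n (x)` and `σ^{h n} ∘ F^n (y)`
agree on the window of radius `k`. -/
def tube (F : (ℤ → A) → (ℤ → A)) (h : ℕ → ℤ) (k : ℕ) (x y : ℤ → A) : Prop :=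
  ∀ n : ℕ, ∀ i : ℤ, |i| ≤ (k : ℤ) → F^[n] x (i + h n) = F^[n] y (i + h n)

/-- `x` is an equicontinuous point along `h` relative to `S`. -/
def eqPt (F : (ℤ → A) → (ℤ → A)) (S : Set (ℤ → A)) (h : ℕ → ℤ) (x : ℤ → A) : Prop :=
  ∀ k : ℕ, ∃ m : ℕ, ∀ y ∈ S, close m x y → tube F h k x y

/-- `F` is sensitive along `h` relative to `S`. -/
def sensitive (F : (ℤ → A) → (ℤ → A)) (S : Set (ℤ → A)) (h : ℕ → ℤ) : Prop :=
  ∃ k : ℕ, ∀ m : ℕ, ∀ x ∈ S, ∃ y ∈ S, close m x y ∧ ¬ tube F h k x y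

/-- `F` is right-expansive along `h` relative to `S`. -/
def rightExpansive (F : (ℤ → A) → (ℤ → A)) (S : Set (ℤ → A)) (h : ℕ → ℤ) : Prop :=
  ∃ k : ℕ, ∀ x ∈ S, ∀ y ∈ S, (∃ i : ℤ, 0 ≤ i ∧ x i ≠ y i) →
    ∀ z ∈ S, ¬ (tube F h k x z ∧ tube F h k y z)

/-- `F` is left-expansive along `h` relative to `S`. -/
def leftExpansive (F : (ℤ → A) → (ℤ → A)) (S : Set (ℤ → A)) (h : ℕ → ℤ) : Prop :=
  ∃ k : ℕ, ∀ x ∈ S, ∀ y ∈ S, (∃ i : ℤ, i ≤ 0 ∧ x i ≠ y i) →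
    ∀ z ∈ S, ¬ (tube F h k x z ∧ tube F h k y z)

/-- Curves with bounded variation. -/
def BV (h : ℕ → ℤ) : Prop := ∃ M : ℤ, 0 < M ∧ ∀ n : ℕ, |h (n + 1) - h n| ≤ M

/-- The preorder `h ≾ k` on curves. -/
def precsim (h k : ℕ → ℤ) : Prop := ∃ M : ℤ, 0 < M ∧ ∀ n : ℕ, h n ≤ k n + M

/-- The equivalence `h ∼ k` on curves. -/
def simEq (h k : ℕ → ℤ) : Prop := ∃ M : ℤ, 0 < M ∧ ∀ n : ℕ, k n - M ≤ h n ∧ h n ≤ k n + M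

/-- The word `u` belongs to the language of `S`. -/
def inLang (S : Set (ℤ → A)) (u : List A) : Prop := ∃ x ∈ S, x ∈ cylAt u 0

/-- Transitivity of a subshift, expressed on its language. -/
def transitiveSubshift (S : Set (ℤ → A)) : Prop :=
  ∀ u v : List A, inLang S u → inLang S v → ∃ w : List A, inLang S (u ++ w ++ v)

/-- `u` is a blocking word along `h` for the CA `F` of neighborhood `⟦r,s⟧`,
relative to the subshift `S`. -/
def blockingWord (F : (ℤ → A) → (ℤ → A)) (S : Set (ℤ → A)) (h : ℕ → ℤ) (r s : ℤ)
    (u : List A) : Prop :=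
  inLang S u ∧
  ∃ e : ℕ, 0 < e ∧
    (∀ n : ℕ, |h (n + 1) - h n| + s < (e : ℤ) ∧ |h (n + 1) - h n| - r < (e : ℤ)) ∧
    (e : ℤ) ≤ u.length ∧
    ∃ p : ℤ, {q : ℤ × ℕ | h q.2 ≤ q.1 ∧ q.1 < h q.2 + (e : ℤ)} ⊆ consSet F (S ∩ cylAt u p)

end Prelude

theorem eqPt_trans_aux {A : Type*} (F : (ℤ → A) → (ℤ → A)) (S : Set (ℤ → A))
    (h k : ℕ → ℤ) (hsim : simEq h k) (x : ℤ → A) (hx : eqPt F S h x) :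
    eqPt F S k x := by
  obtain ⟨M, hM, hMb⟩ := hsim
  intro j
  obtain ⟨m, hm⟩ := hx (j + M.toNat)
  refine ⟨m, fun y hy hcl => ?_⟩
  intro n i hi
  have ht := hm y hy hcl n (i + (k n - h n)) ?_
  · have : i + (k n - h n) + h n = i + k n := by ring
    rwa [this] at ht
  · have h1 := (hMb n).1
    have h2 := (hMb n).2
    have hMt : M ≤ ((j + M.toNat : ℕ) : ℤ) - (j : ℤ) := by
      push_cast
      rw [Int.toNat_of_nonneg hM.le]
      omega
    have := abs_add_le i (k n - h n)
    have habs : |k n - h n| ≤ M := abs_le.mpr ⟨by omega, by omega⟩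
    omega

/-- existence of equicontinuous points along `h` (resp. equicontinuity
at every point of `Σ`) transfers to any curve `k ∼ h`. -/
theorem stmt3 {A : Type*} [Fintype A] [TopologicalSpace A] [DiscreteTopology A]
    (F : (ℤ → A) → (ℤ → A)) (r s : ℤ) (hF : IsCA F r s)
    (S : Set (ℤ → A)) (hS : IsSubshift S)
    (h k : ℕ → ℤ) (hh : BV h) (hk : BV k) (hsim : simEq h k) :
    ((∃ x ∈ S, eqPt F S h x) → ∃ x ∈ S, eqPt F S k x) ∧
    ((∀ x ∈ S, eqPt F S h x) → ∀ x ∈ S, eqPt F S k x) := by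
  constructor
  · rintro ⟨x, hxS, hx⟩
    exact ⟨x, hxS, eqPt_trans_aux F S h k hsim x hx⟩
  · intro hall x hxS
    exact eqPt_trans_aux F S h k hsim x (hall x hxS)
end

section
/- Let (A^ℤ, F) be a cellular automaton and Σ a transitive subshift. If F is not sensitive along a bounded-variation curve h relative to Σ, then F admits a blocking word along h relative to Σ. -/
open Classical

/-- on a transitive subshift, non-sensitivity along a
bounded-variation curve `h` yields a blocking word along `h`. -/
theorem stmt6 {A : Type*} [Fintype A] [TopologicalSpace A] [DiscreteTopology A]
    (F : (ℤ → A) → (ℤ → A)) (r s : ℤ) (hF : IsCA F r s)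
    (S : Set (ℤ → A)) (hS : IsSubshift S) (htrans : transitiveSubshift S)
    (h : ℕ → ℤ) (hh : BV h) (hns : ¬ sensitive F S h) :
    ∃ u : List A, blockingWord F S h r s u := by
  -- Auxiliary: membership under inverse shifts.
  have shift_inv_mem : ∀ {x : ℤ → A}, x ∈ S → ∀ k : ℕ, (fun i => x (i - (k : ℤ))) ∈ S := by
    intro x hx k
    induction k with
    | zero => simpa using hx
    | succ k ih =>
      have : (fun i => x (i - (k : ℤ))) ∈ shift '' S := by rw [hS.2]; exact ih
      obtain ⟨y, hy, hyz⟩ := this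
      have hval : (fun i => x (i - ((k + 1 : ℕ) : ℤ))) = y := by
        funext i
        have := congrFun hyz (i - 1)
        simp only [shift] at this
        rw [show i - 1 + 1 = i by ring] at this
        rw [this]
        congr 1
        push_cast
        ring
      rw [hval]; exact hy
  -- the negation of sensitivity
  rw [sensitive] at hns
  push_neg at hns
  obtain ⟨M, hM, hMb⟩ := hh
  obtain ⟨e, heZ⟩ : ∃ e : ℕ, (e : ℤ) = M + |r| + |s| + 1 := by
    refine ⟨(M + |r| + |s| + 1).toNat, Int.toNat_of_nonneg ?_⟩
    have := abs_nonneg r; have := abs_nonneg s; omega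
  have hepos : 0 < e := by
    have := abs_nonneg r; have := abs_nonneg s; omega
  obtain ⟨m, x, hxS, htube⟩ := hns e
  -- choose window radius
  obtain ⟨m', hm1, hm2⟩ : ∃ m' : ℕ, m ≤ m' ∧ e ≤ m' := ⟨max m e, le_max_left m e, le_max_right m e⟩
  have hulen : (List.ofFn (fun j : Fin (2 * m' + 1) => x ((j : ℤ) - (m' : ℤ)))).length
      = 2 * m' + 1 := by simp
  have huget : ∀ i : Fin (List.ofFn (fun j : Fin (2 * m' + 1) => x ((j : ℤ) - (m' : ℤ)))).length,
      (List.ofFn (fun j : Fin (2 * m' + 1) => x ((j : ℤ) - (m' : ℤ)))).get i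
        = x ((i : ℕ) - (m' : ℤ)) := by
    intro i
    rw [List.get_ofFn]
    simp
  set u : List A := List.ofFn (fun j : Fin (2 * m' + 1) => x ((j : ℤ) - (m' : ℤ))) with hu
  -- the shifted point realizing u at position 0
  have hinL : inLang S u := by
    refine ⟨fun i => x (i - (m' : ℤ)), shift_inv_mem hxS m', ?_⟩
    intro i
    rw [huget i]
    simp
  -- members of the cylinder at -m' are close to x
  have hclose : ∀ y ∈ cylAt u (-(m' : ℤ)), close m x y := by
    intro y hy i hi
    have hi' : |i| ≤ (m' : ℤ) := le_trans hi (by exact_mod_cast hm1)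
    rcases abs_le.mp hi' with ⟨ha, hb⟩
    have h1 : (0 : ℤ) ≤ i + m' := by omega
    have h2 : i + (m' : ℤ) < 2 * m' + 1 := by omega
    set j : ℕ := (i + (m' : ℤ)).toNat with hj
    have hjv : (j : ℤ) = i + (m' : ℤ) := by rw [hj, Int.toNat_of_nonneg h1]
    have hjlt : j < u.length := by
      rw [hulen]
      have : (j : ℤ) < 2 * m' + 1 := by omega
      exact_mod_cast this
    have := hy ⟨j, hjlt⟩
    rw [huget ⟨j, hjlt⟩] at this
    simp only [hjv] at this
    rw [show -(m' : ℤ) + (i + m') = i by ring, show i + (m' : ℤ) - m' = i by ring] at this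
    exact this.symm
  refine ⟨u, hinL, e, hepos, ?_, ?_, -(m' : ℤ), ?_⟩
  · intro n
    have hn := hMb n
    have hs : s ≤ |s| := le_abs_self s
    have hr2 : -r ≤ |r| := neg_le_abs r
    have hr := abs_nonneg r
    have hs0 := abs_nonneg s
    constructor <;> omega
  · rw [hulen]
    push_cast
    omega
  · rintro ⟨pos, n⟩ ⟨hq1, hq2⟩ y ⟨hyS, hyc⟩ z ⟨hzS, hzc⟩
    have hty : tube F h e x y := htube y hyS (hclose y hyc)
    have htz : tube F h e x z := htube z hzS (hclose z hzc)
    have habs : |pos - h n| ≤ (e : ℤ) := by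
      rw [abs_le]
      simp only [Set.mem_setOf_eq] at hq1 hq2
      omega
    have h1 := hty n (pos - h n) habs
    have h2 := htz n (pos - h n) habs
    rw [show pos - h n + h n = pos by ring] at h1 h2
    simp only []
    rw [← h1, ← h2]
end

section
/- Let (A^ℤ, F) be a cellular automaton and Σ a transitive subshift. If F admits a blocking word along a bounded-variation curve h relative to Σ, then the set of equicontinuous points of F along h relative to Σ is a nonempty, σ-invariant, dense G_δ subset of Σ. -/
open Classical

/-!
Two occurrences of the blocking word, at offsets `tL ≤ tR`, pin down the columns of width `e`
following `h` from each of them; since the slope of `h` plus the neighbourhood radius is less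
than `e`, agreement of two configurations between the columns at time `0` propagates to every
time. Hence a configuration of `Σ` in which the blocking word occurs arbitrarily far to both
sides is an equicontinuous point. By transitivity the blocking word can be glued on both sides
of any word of the language, so the configurations with occurrences beyond `±c` form an open
dense subset of `Σ` for every `c`, and Baire's theorem in the compact space `Σ` makes their
intersection dense. Being an equicontinuous point is a countable intersection of conditions
each of which only depends on a finite window, which gives the `G_δ` property.
-/

open Filter Topology

section Translation

variable {A : Type*}

def shiftBy (t : ℤ) (x : ℤ → A) : ℤ → A := fun i => x (i + t)

@[simp]
lemma shiftBy_apply (t : ℤ) (x : ℤ → A) (i : ℤ) : shiftBy t x i = x (i + t) := rfl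

@[simp]
lemma shiftBy_zero (x : ℤ → A) : shiftBy 0 x = x := by
  funext i
  simp

lemma shift_shiftBy (t : ℤ) (x : ℤ → A) : shift (shiftBy t x) = shiftBy (t + 1) x := by
  funext i
  simp only [shift, shiftBy_apply, add_assoc, add_comm 1 t]

lemma shift_injective : Function.Injective (shift : (ℤ → A) → ℤ → A) := by
  intro x y hxy
  funext i
  simpa [shift] using congrFun hxy (i - 1)

lemma IsCA.shiftBy_comm {F : (ℤ → A) → (ℤ → A)} {r s : ℤ} (hF : IsCA F r s) (t : ℤ)
    (x : ℤ → A) : F (shiftBy t x) = shiftBy t (F x) := by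
  induction t using Int.induction_on with
  | zero => simp
  | succ i ih => rw [← shift_shiftBy, hF.1, ih, shift_shiftBy]
  | pred i ih =>
    apply shift_injective
    rw [← hF.1, shift_shiftBy, shift_shiftBy, sub_add_cancel, ih]

lemma IsCA.iterate_shiftBy_comm {F : (ℤ → A) → (ℤ → A)} {r s : ℤ} (hF : IsCA F r s)
    (n : ℕ) (t : ℤ) (x : ℤ → A) : F^[n] (shiftBy t x) = shiftBy t (F^[n] x) := by
  induction n with
  | zero => rfl
  | succ n ih => rw [Function.iterate_succ_apply', Function.iterate_succ_apply', ih,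
      hF.shiftBy_comm]

lemma IsCA.apply_eq_of_eqOn {F : (ℤ → A) → (ℤ → A)} {r s : ℤ} (hF : IsCA F r s)
    {x y : ℤ → A} {i : ℤ} (hxy : ∀ j, i + r ≤ j → j ≤ i + s → x j = y j) : F x i = F y i := by
  have key : F (shiftBy i x) 0 = F (shiftBy i y) 0 :=
    hF.2 _ _ fun j hj₁ hj₂ => hxy (j + i) (by linarith) (by linarith)
  simpa [hF.shiftBy_comm] using key

lemma close_of_close_succ_shift {m : ℕ} {x y : ℤ → A} (hxy : close (m + 1) (shift x) (shift y)) :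
    close m x y := by
  intro i hi
  simpa [shift] using hxy (i - 1) (by rw [abs_le] at hi ⊢; omega)

variable [TopologicalSpace A] {S : Set (ℤ → A)}

lemma IsSubshift.shift_mem (hS : IsSubshift S) {x : ℤ → A} (hx : x ∈ S) : shift x ∈ S :=
  hS.2 ▸ Set.mem_image_of_mem shift hx

lemma IsSubshift.shiftBy_mem (hS : IsSubshift S) (t : ℤ) {x : ℤ → A} (hx : x ∈ S) :
    shiftBy t x ∈ S := by
  induction t using Int.induction_on with
  | zero => simpa using hx
  | succ i ih => exact shift_shiftBy (i : ℤ) x ▸ hS.shift_mem ih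
  | pred i ih =>
    rw [← hS.2] at ih
    obtain ⟨z, hz, hzx⟩ := ih
    rw [← sub_add_cancel (-(i : ℤ)) 1, ← shift_shiftBy, shift_injective.eq_iff] at hzx
    exact hzx ▸ hz

end Translation

section Cylinders

variable {A : Type*} {u : List A} {q : ℤ} {x : ℤ → A}

lemma mem_cylAt_iff : x ∈ cylAt u q ↔ ∀ (i : ℕ) (hi : i < u.length), x (q + i) = u[i] :=
  ⟨fun H i hi => H ⟨i, hi⟩, fun H i => H i i.2⟩

lemma shiftBy_mem_cylAt {t : ℤ} (hx : x ∈ cylAt u (q + t)) : shiftBy t x ∈ cylAt u q := by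
  rw [mem_cylAt_iff] at hx ⊢
  intro i hi
  simpa [add_right_comm] using hx i hi

lemma mem_cylAt_of_eqOn {y : ℤ → A} (hx : x ∈ cylAt u q)
    (hxy : ∀ i, q ≤ i → i < q + u.length → x i = y i) : y ∈ cylAt u q := by
  rw [mem_cylAt_iff] at hx ⊢
  intro i hi
  rw [← hx i hi, hxy] <;> omega

lemma mem_cylAt_append {v : List A} :
    x ∈ cylAt (u ++ v) q ↔ x ∈ cylAt u q ∧ x ∈ cylAt v (q + u.length) := by
  simp only [mem_cylAt_iff, List.length_append]
  constructor
  · intro H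
    refine ⟨fun i hi => ?_, fun i hi => ?_⟩
    · simpa [List.getElem_append_left hi] using H i (by omega)
    · simpa [add_assoc, List.getElem_append_right] using H (u.length + i) (by omega)
  · rintro ⟨Hu, Hv⟩ i hi
    rcases lt_or_ge i u.length with hiu | hiu
    · simpa [List.getElem_append_left hiu] using Hu i hiu
    · rw [List.getElem_append_right hiu, ← Hv (i - u.length) (by omega)]
      congr 1
      omega

def window (x : ℤ → A) (a : ℤ) (n : ℕ) : List A := List.ofFn fun l : Fin n => x (a + l)

lemma mem_cylAt_window (a : ℤ) (n : ℕ) : x ∈ cylAt (window x a n) a := by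
  simp [mem_cylAt_iff, window]

lemma close_of_mem_cylAt_window {m : ℕ} {y : ℤ → A}
    (hy : y ∈ cylAt (window x (-m) (2 * m + 1)) (-m)) : close m x y := by
  intro i hi
  rw [abs_le] at hi
  have := mem_cylAt_iff.mp hy (i + m).toNat (by simp [window]; omega)
  simp only [window, List.getElem_ofFn] at this
  rwa [show -(m : ℤ) + (i + m).toNat = i by omega, eq_comm] at this

variable [TopologicalSpace A] {S : Set (ℤ → A)}

lemma inLang_window (hS : IsSubshift S) (hx : x ∈ S) (a : ℤ) (n : ℕ) :
    inLang S (window x a n) :=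
  ⟨shiftBy a x, hS.shiftBy_mem a hx, shiftBy_mem_cylAt (by simpa using mem_cylAt_window a n)⟩

lemma inLang.exists_mem_cylAt (hS : IsSubshift S) (hu : inLang S u) (q : ℤ) :
    ∃ x ∈ S, x ∈ cylAt u q := by
  obtain ⟨x, hx, hxu⟩ := hu
  exact ⟨shiftBy (-q) x, hS.shiftBy_mem _ hx, shiftBy_mem_cylAt (by simpa using hxu)⟩

end Cylinders

section Blocking

variable {A : Type*} [TopologicalSpace A]

lemma iterate_apply_eq_of_mem_cylAt {F : (ℤ → A) → (ℤ → A)} {r s : ℤ} (hF : IsCA F r s)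
    {S : Set (ℤ → A)} (hS : IsSubshift S) {h : ℕ → ℤ} {u : List A} {e : ℕ} {p : ℤ}
    (hcons : {q : ℤ × ℕ | h q.2 ≤ q.1 ∧ q.1 < h q.2 + (e : ℤ)} ⊆ consSet F (S ∩ cylAt u p))
    {t : ℤ} {x y : ℤ → A} (hx : x ∈ S ∩ cylAt u (p + t)) (hy : y ∈ S ∩ cylAt u (p + t))
    (n : ℕ) {i : ℤ} (hi : h n + t ≤ i) (hi' : i < h n + e + t) : F^[n] x i = F^[n] y i := by
  have hq : (i - t, n) ∈ {q : ℤ × ℕ | h q.2 ≤ q.1 ∧ q.1 < h q.2 + (e : ℤ)} :=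
    ⟨by simp only; linarith, by simp only; linarith⟩
  have key := hcons hq (shiftBy t x) ⟨hS.shiftBy_mem t hx.1, shiftBy_mem_cylAt hx.2⟩
    (shiftBy t y) ⟨hS.shiftBy_mem t hy.1, shiftBy_mem_cylAt hy.2⟩
  simpa [hF.iterate_shiftBy_comm] using key

lemma iterate_eqOn_between_mem_cylAt {F : (ℤ → A) → (ℤ → A)} {r s : ℤ} (hF : IsCA F r s)
    {S : Set (ℤ → A)} (hS : IsSubshift S) {h : ℕ → ℤ} {u : List A} {e : ℕ}
    (hslope : ∀ n : ℕ, |h (n + 1) - h n| + s < (e : ℤ) ∧ |h (n + 1) - h n| - r < (e : ℤ))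
    {p : ℤ} (hcons : {q : ℤ × ℕ | h q.2 ≤ q.1 ∧ q.1 < h q.2 + (e : ℤ)} ⊆ consSet F (S ∩ cylAt u p))
    {tL tR : ℤ} {x y : ℤ → A}
    (hxL : x ∈ S ∩ cylAt u (p + tL)) (hyL : y ∈ S ∩ cylAt u (p + tL))
    (hxR : x ∈ S ∩ cylAt u (p + tR)) (hyR : y ∈ S ∩ cylAt u (p + tR))
    (hxy : ∀ i, h 0 + tL ≤ i → i < h 0 + e + tR → x i = y i) (n : ℕ) :
    ∀ i, h n + tL ≤ i → i < h n + e + tR → F^[n] x i = F^[n] y i := by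
  induction n with
  | zero => exact hxy
  | succ n ih =>
    intro i hi hi'
    rcases lt_or_ge i (h (n + 1) + e + tL) with hiL | hiL
    · exact iterate_apply_eq_of_mem_cylAt hF hS hcons hxL hyL (n + 1) hi hiL
    rcases le_or_gt (h (n + 1) + tR) i with hiR | hiR
    · exact iterate_apply_eq_of_mem_cylAt hF hS hcons hxR hyR (n + 1) hiR hi'
    -- between the two columns the slope bound keeps the neighbourhood of `i` inside the
    -- region where the configurations already agree at time `n`
    rw [Function.iterate_succ_apply', Function.iterate_succ_apply']
    refine hF.apply_eq_of_eqOn fun j hj hj' => ih j ?_ ?_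
    · linarith [(hslope n).2, neg_abs_le (h (n + 1) - h n)]
    · linarith [(hslope n).1, le_abs_self (h (n + 1) - h n)]

def occursBeyond (u : List A) (c : ℕ) : Set (ℤ → A) :=
  {x | (∃ L ≤ -(c : ℤ), x ∈ cylAt u L) ∧ ∃ R ≥ (c : ℤ), x ∈ cylAt u R}

lemma eqPt_of_forall_mem_occursBeyond {F : (ℤ → A) → (ℤ → A)} {r s : ℤ} (hF : IsCA F r s)
    {S : Set (ℤ → A)} (hS : IsSubshift S) {h : ℕ → ℤ} {u : List A}
    (hu : blockingWord F S h r s u) {x : ℤ → A} (hx : x ∈ S) (hocc : ∀ c, x ∈ occursBeyond u c) :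
    eqPt F S h x := by
  obtain ⟨-, e, he, hslope, -, p, hcons⟩ := hu
  intro k
  obtain ⟨⟨L, hL, hxL⟩, R, hR, hxR⟩ := hocc (k + p.natAbs)
  -- `[a, b]` covers both occurrences and the strip between their columns at time `0`
  set a := L - (h 0).natAbs - p.natAbs
  set b := R + u.length + (h 0).natAbs + p.natAbs + e
  refine ⟨a.natAbs + b.natAbs, fun y hy hxy => ?_⟩
  have hxy' : ∀ i, a ≤ i → i ≤ b → x i = y i := fun i hi hi' => hxy i (by rw [abs_le]; omega)
  have hyL : y ∈ cylAt u L := mem_cylAt_of_eqOn hxL fun i hi hi' => hxy' i (by omega) (by omega)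
  have hyR : y ∈ cylAt u R := mem_cylAt_of_eqOn hxR fun i hi hi' => hxy' i (by omega) (by omega)
  have key := iterate_eqOn_between_mem_cylAt (tL := L - p) (tR := R - p) hF hS hslope hcons
    ⟨hx, by rwa [add_sub_cancel]⟩ ⟨hy, by rwa [add_sub_cancel]⟩
    ⟨hx, by rwa [add_sub_cancel]⟩ ⟨hy, by rwa [add_sub_cancel]⟩
    (fun i hi hi' => hxy' i (by omega) (by omega))
  intro n i hi
  rw [abs_le] at hi
  exact key n (i + h n) (by omega) (by omega)

end Blocking

section Topology

variable {A : Type*} [TopologicalSpace A] [DiscreteTopology A]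

lemma isOpen_cylAt (u : List A) (q : ℤ) : IsOpen (cylAt u q) := by
  simp only [cylAt, Set.ofPred_forall]
  exact isOpen_iInter_of_finite fun i =>
    (isOpen_discrete {u.get i}).preimage (continuous_apply (A := fun _ : ℤ => A) _)

lemma isOpen_occursBeyond (u : List A) (c : ℕ) : IsOpen (occursBeyond u c) := by
  have : occursBeyond u c = (⋃ L ≤ -(c : ℤ), cylAt u L) ∩ ⋃ R ≥ (c : ℤ), cylAt u R := by
    ext x
    simp [occursBeyond]
  rw [this]
  exact (isOpen_biUnion fun L _ => isOpen_cylAt u L).inter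
    (isOpen_biUnion fun R _ => isOpen_cylAt u R)

lemma hasBasis_nhds_close (x : ℤ → A) :
    (𝓝 x).HasBasis (fun _ : ℕ => True) (fun m => {y | close m x y}) := by
  refine ⟨fun t => ?_⟩
  simp only [nhds_pi, Filter.mem_pi', nhds_discrete, Filter.mem_pure, true_and]
  constructor
  · rintro ⟨I, t', ht', hI⟩
    refine ⟨I.sup Int.natAbs, fun y hy => hI fun i hi => ?_⟩
    have hi' : |i| ≤ (I.sup Int.natAbs : ℕ) := by
      rw [Int.abs_eq_natAbs]
      exact_mod_cast Finset.le_sup (f := Int.natAbs) hi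
    simpa [← hy i hi'] using ht' i
  · rintro ⟨m, hm⟩
    refine ⟨Finset.Icc (-(m : ℤ)) m, fun i => {x i}, fun i => rfl, fun y hy => hm fun i hi => ?_⟩
    exact (hy i (by simpa [abs_le] using hi)).symm

lemma dense_preimage_val_of_forall_close {S T : Set (ℤ → A)}
    (hT : ∀ x ∈ S, ∀ m, ∃ y ∈ S, y ∈ T ∧ close m x y) :
    Dense (Subtype.val ⁻¹' T : Set S) := by
  intro x
  rw [mem_closure_iff_nhds_basis (nhds_subtype S x ▸ (hasBasis_nhds_close x.1).comap _)]
  intro m _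
  obtain ⟨y, hyS, hyT, hxy⟩ := hT x.1 x.2 m
  exact ⟨⟨y, hyS⟩, hyT, hxy⟩

end Topology

section Equicontinuity

variable {A : Type*} {F : (ℤ → A) → (ℤ → A)} {S : Set (ℤ → A)} {h : ℕ → ℤ}

def tubeStableSet (F : (ℤ → A) → (ℤ → A)) (S : Set (ℤ → A)) (h : ℕ → ℤ) (k : ℕ) :
    Set (ℤ → A) :=
  {x | ∃ m, ∀ y ∈ S, ∀ z ∈ S, close m x y → close m x z → tube F h k y z}

lemma eqPt_iff_forall_mem_tubeStableSet {x : ℤ → A} (hx : x ∈ S) :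
    eqPt F S h x ↔ ∀ k, x ∈ tubeStableSet F S h k := by
  refine forall_congr' fun k => ⟨fun ⟨m, hm⟩ => ⟨m, ?_⟩, fun ⟨m, hm⟩ => ⟨m, ?_⟩⟩
  · exact fun y hy z hz hxy hxz n i hi => (hm y hy hxy n i hi).symm.trans (hm z hz hxz n i hi)
  · exact fun y hy hxy => hm x hx y hy (fun _ _ => rfl) hxy

lemma isOpen_tubeStableSet [TopologicalSpace A] [DiscreteTopology A] (k : ℕ) :
    IsOpen (tubeStableSet F S h k) := by
  refine isOpen_iff_mem_nhds.mpr fun x ⟨m, hm⟩ => ?_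
  refine (hasBasis_nhds_close x).mem_iff.mpr ⟨m, trivial, fun x' hxx' => ⟨m, ?_⟩⟩
  exact fun y hy z hz hx'y hx'z => hm y hy z hz
    (fun i hi => (hxx' i hi).trans (hx'y i hi)) (fun i hi => (hxx' i hi).trans (hx'z i hi))

lemma isGδ_preimage_val_setOf_eqPt [TopologicalSpace A] [DiscreteTopology A] :
    IsGδ (Subtype.val ⁻¹' {x | eqPt F S h x} : Set S) := by
  have : (Subtype.val ⁻¹' {x | eqPt F S h x} : Set S) =
      ⋂ k, Subtype.val ⁻¹' tubeStableSet F S h k := by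
    ext x
    simp [eqPt_iff_forall_mem_tubeStableSet x.2]
  rw [this]
  exact .iInter fun k => ((isOpen_tubeStableSet k).preimage continuous_subtype_val).isGδ

lemma tube_shift_of_tube_succ {r s : ℤ} (hF : IsCA F r s) {k : ℕ} {x y : ℤ → A}
    (hxy : tube F h (k + 1) x y) : tube F h k (shift x) (shift y) := by
  intro n i hi
  rw [(Function.Commute.iterate_left hF.1 n) x, (Function.Commute.iterate_left hF.1 n) y]
  simpa only [shift, add_right_comm] using hxy n (i + 1) (by rw [abs_le] at hi ⊢; omega)

lemma eqPt_shift [TopologicalSpace A] {r s : ℤ} (hF : IsCA F r s) (hS : IsSubshift S)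
    {x : ℤ → A} (hx : eqPt F S h x) : eqPt F S h (shift x) := by
  intro k
  obtain ⟨m, hm⟩ := hx (k + 1)
  refine ⟨m + 1, fun y hy hxy => ?_⟩
  obtain ⟨y', hy', rfl⟩ : y ∈ shift '' S := hS.2.symm ▸ hy
  exact tube_shift_of_tube_succ hF (hm y' hy' (close_of_close_succ_shift hxy))

end Equicontinuity

section Density

variable {A : Type*} [TopologicalSpace A] {S : Set (ℤ → A)}

lemma exists_close_mem_occursBeyond (hS : IsSubshift S) (htrans : transitiveSubshift S)
    {u : List A} (hu : inLang S u) (c : ℕ) {x : ℤ → A} (hx : x ∈ S) (m : ℕ) :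
    ∃ y ∈ S, y ∈ occursBeyond u c ∧ close m x y := by
  set M := m + c
  set v := window x (-M) (2 * M + 1)
  obtain ⟨w₁, hw₁⟩ := htrans u v hu (inLang_window hS hx _ _)
  obtain ⟨w₂, hw₂⟩ := htrans _ u hw₁ hu
  obtain ⟨y, hy, hyw⟩ := hw₂.exists_mem_cylAt hS (-M - u.length - w₁.length)
  simp only [mem_cylAt_append, List.length_append] at hyw
  obtain ⟨⟨⟨⟨hyu, -⟩, hyv⟩, -⟩, hyu'⟩ := hyw
  have hv : v.length = 2 * M + 1 := List.length_ofFn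
  refine ⟨y, hy, ⟨⟨_, by omega, hyu⟩, ⟨_, by omega, hyu'⟩⟩, ?_⟩
  have hxy : close M x y := close_of_mem_cylAt_window (by convert hyv using 2; push_cast; ring)
  exact fun i hi => hxy i (by omega)

lemma dense_preimage_val_setOf_eqPt [Finite A] [DiscreteTopology A]
    {F : (ℤ → A) → (ℤ → A)} {r s : ℤ} (hF : IsCA F r s) (hS : IsSubshift S)
    (htrans : transitiveSubshift S) {h : ℕ → ℤ} {u : List A} (hu : blockingWord F S h r s u) :
    Dense (Subtype.val ⁻¹' {x | eqPt F S h x} : Set S) := by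
  have : CompactSpace S := isCompact_iff_compactSpace.mp hS.1.isCompact
  have hBaire : Dense (⋂ c, Subtype.val ⁻¹' occursBeyond u c : Set S) :=
    dense_iInter_of_isOpen_nat
      (fun c => (isOpen_occursBeyond u c).preimage continuous_subtype_val)
      (fun c => dense_preimage_val_of_forall_close fun x hx m =>
        exists_close_mem_occursBeyond hS htrans hu.1 c hx m)
  refine hBaire.mono fun x hx => ?_
  rw [Set.mem_iInter] at hx
  exact eqPt_of_forall_mem_occursBeyond hF hS hu x.2 hx

end Density

theorem stmt7_general {A : Type*} [Fintype A] [TopologicalSpace A] [DiscreteTopology A]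
    (F : (ℤ → A) → (ℤ → A)) (r s : ℤ) (hF : IsCA F r s)
    (S : Set (ℤ → A)) (hS : IsSubshift S) (htrans : transitiveSubshift S)
    (h : ℕ → ℤ) (u : List A) (hu : blockingWord F S h r s u) :
    ({x ∈ S | eqPt F S h x}).Nonempty ∧
    (∀ x ∈ {x ∈ S | eqPt F S h x}, shift x ∈ {x ∈ S | eqPt F S h x}) ∧
    IsGδ (Subtype.val ⁻¹' {x | eqPt F S h x} : Set S) ∧
    Dense (Subtype.val ⁻¹' {x | eqPt F S h x} : Set S) := by
  have hdense := dense_preimage_val_setOf_eqPt hF hS htrans hu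
  obtain ⟨x₀, hx₀, -⟩ := hu.1
  have : Nonempty S := ⟨⟨x₀, hx₀⟩⟩
  obtain ⟨⟨x, hxS⟩, hx⟩ := hdense.nonempty
  exact ⟨⟨x, hxS, hx⟩, fun x hx => ⟨hS.shift_mem hx.1, eqPt_shift hF hS hx.2⟩,
    isGδ_preimage_val_setOf_eqPt, hdense⟩

/-- on a transitive subshift, a blocking word along `h` implies that
the set of equicontinuous points along `h` is nonempty, shift-invariant, and a
dense Gδ subset of `Σ`. -/
theorem stmt7 {A : Type*} [Fintype A] [TopologicalSpace A] [DiscreteTopology A]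
    (F : (ℤ → A) → (ℤ → A)) (r s : ℤ) (hF : IsCA F r s)
    (S : Set (ℤ → A)) (hS : IsSubshift S) (htrans : transitiveSubshift S)
    (h : ℕ → ℤ) (hh : BV h) (u : List A) (hu : blockingWord F S h r s u) :
    ({x ∈ S | eqPt F S h x}).Nonempty ∧
    (∀ x ∈ {x ∈ S | eqPt F S h x}, shift x ∈ {x ∈ S | eqPt F S h x}) ∧
    IsGδ (Subtype.val ⁻¹' {x | eqPt F S h x} : Set S) ∧
    Dense (Subtype.val ⁻¹' {x | eqPt F S h x} : Set S) :=
  stmt7_general F r s hF S hS htrans h u hu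
end

section
/- Let F be a cellular automaton and u a word of length l. If the set of consequences Cons_F([u]_0) contains the two sites ⟨x,t⟩ and ⟨x+2l,t⟩, then all sites ⟨y,t⟩ ∈ Cons_F([u]_0) (y ∈ ℤ) are in the same state for every initial configuration in [u]_0; i.e., there is a single letter a ∈ A such that for all c ∈ [u]_0 and all y with ⟨y,t⟩ ∈ Cons_F([u]_0), F^t(c)_y = a. -/
open Classical

section AuxStmt12

variable {A : Type*}

lemma shift_iter_apply (x : ℤ → A) (n : ℕ) (i : ℤ) :
    shift^[n] x i = x (i + n) := by
  induction n generalizing x i with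
  | zero => simp
  | succ n ih =>
      rw [Function.iterate_succ_apply, ih]
      show x (i + n + 1) = x (i + (n + 1 : ℕ))
      congr 1
      push_cast
      ring

lemma F_iter_shift (F : (ℤ → A) → (ℤ → A)) (hs : ∀ x, F (shift x) = shift (F x))
    (t : ℕ) (x : ℤ → A) : F^[t] (shift x) = shift (F^[t] x) := by
  induction t generalizing x with
  | zero => simp
  | succ t ih =>
      rw [Function.iterate_succ_apply, Function.iterate_succ_apply, hs, ih]

lemma F_iter_shift_iter (F : (ℤ → A) → (ℤ → A)) (hs : ∀ x, F (shift x) = shift (F x))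
    (t n : ℕ) (x : ℤ → A) : F^[t] (shift^[n] x) = shift^[n] (F^[t] x) := by
  induction n generalizing x with
  | zero => simp
  | succ n ih =>
      rw [Function.iterate_succ_apply, Function.iterate_succ_apply,
        ih, F_iter_shift F hs]

/-- A configuration containing `u` at position `0` and at position `k`. -/
def conf2 (u : List A) (b : A) (k : ℤ) : ℤ → A :=
  fun i =>
    if h : 0 ≤ i ∧ i < (u.length : ℤ) then u.get ⟨i.toNat, by omega⟩
    else if h' : 0 ≤ i - k ∧ i - k < (u.length : ℤ) then u.get ⟨(i - k).toNat, by omega⟩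
    else b

lemma conf2_mem (u : List A) (b : A) (k : ℤ) : conf2 u b k ∈ cylAt u 0 := by
  intro i
  have hi : ((i : ℕ) : ℤ) < (u.length : ℤ) := by exact_mod_cast i.isLt
  show conf2 u b k (0 + ((i : ℕ) : ℤ)) = u.get i
  rw [zero_add]
  unfold conf2
  rw [dif_pos ⟨by positivity, hi⟩]
  exact congrArg u.get (Fin.ext (by simp))

lemma conf2_shift_mem (u : List A) (b : A) (k : ℤ) (hk : (u.length : ℤ) ≤ k) :
    shift^[k.toNat] (conf2 u b k) ∈ cylAt u 0 := by
  intro i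
  have hi : ((i : ℕ) : ℤ) < (u.length : ℤ) := by exact_mod_cast i.isLt
  have hi0 : (0 : ℤ) ≤ ((i : ℕ) : ℤ) := by positivity
  have hkn : ((k.toNat : ℕ) : ℤ) = k := Int.toNat_of_nonneg (by omega)
  show shift^[k.toNat] (conf2 u b k) (0 + ((i : ℕ) : ℤ)) = u.get i
  rw [zero_add, shift_iter_apply, hkn]
  unfold conf2
  rw [dif_neg (by omega), dif_pos ⟨by omega, by omega⟩]
  exact congrArg u.get (Fin.ext (by simp))

/-- Key step: two consequence sites on row `t` at distance at least `|u|`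
carry the same state. -/
lemma key_step (F : (ℤ → A) → (ℤ → A)) (hs : ∀ x, F (shift x) = shift (F x))
    (u : List A) (b : A) (t : ℕ) (y z : ℤ) (hk : (u.length : ℤ) ≤ z - y)
    (hy : (y, t) ∈ consSet F (cylAt u 0)) (hz : (z, t) ∈ consSet F (cylAt u 0))
    {c0 : ℤ → A} (hc0 : c0 ∈ cylAt u 0) :
    F^[t] c0 y = F^[t] c0 z := by
  set k : ℤ := z - y with hkdef
  set c : ℤ → A := conf2 u b k with hc
  have hcC : c ∈ cylAt u 0 := conf2_mem u b k
  have hdC : shift^[k.toNat] c ∈ cylAt u 0 := conf2_shift_mem u b k hk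
  have h1 : F^[t] c0 y = F^[t] (shift^[k.toNat] c) y := hy c0 hc0 _ hdC
  have h2 : F^[t] (shift^[k.toNat] c) y = F^[t] c z := by
    have hkn : ((k.toNat : ℕ) : ℤ) = k :=
      Int.toNat_of_nonneg ((Int.natCast_nonneg u.length).trans hk)
    rw [F_iter_shift_iter F hs, shift_iter_apply, hkn]
    rw [hkdef]
    ring_nf
  have h3 : F^[t] c z = F^[t] c0 z := hz c hcC c0 hc0
  rw [h1, h2, h3]

end AuxStmt12

/-- if the consequences of a word `u` of length `l` contain two
sites at distance `2l` on the same row `t`, then all consequence sites on row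
`t` carry one common state for every configuration extending `u`. -/
theorem stmt12 {A : Type*} [Fintype A] [Nonempty A]
    (F : (ℤ → A) → (ℤ → A)) (r s : ℤ) (hF : IsCA F r s)
    (u : List A) (x : ℤ) (t : ℕ)
    (h1 : (x, t) ∈ consSet F (cylAt u 0))
    (h2 : (x + 2 * (u.length : ℤ), t) ∈ consSet F (cylAt u 0)) :
    ∃ a : A, ∀ c ∈ cylAt u 0, ∀ y : ℤ,
      (y, t) ∈ consSet F (cylAt u 0) → F^[t] c y = a := by
  have hs := hF.1
  set b : A := Classical.arbitrary A
  set c0 : ℤ → A := conf2 u b 0 with hc0def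
  have hc0 : c0 ∈ cylAt u 0 := conf2_mem u b 0
  have hl0 : (0 : ℤ) ≤ (u.length : ℤ) := by positivity
  refine ⟨F^[t] c0 x, ?_⟩
  intro c hc y hy
  have hcy : F^[t] c y = F^[t] c0 y := hy c hc c0 hc0
  rw [hcy]
  by_cases hcase : (u.length : ℤ) ≤ y - x
  · exact (key_step F hs u b t x y hcase h1 hy hc0).symm
  · have h3 : F^[t] c0 x = F^[t] c0 (x + 2 * (u.length : ℤ)) :=
      key_step F hs u b t x (x + 2 * (u.length : ℤ)) (by omega) h1 h2 hc0
    have h4 : F^[t] c0 y = F^[t] c0 (x + 2 * (u.length : ℤ)) :=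
      key_step F hs u b t y (x + 2 * (u.length : ℤ)) (by omega) hy h2 hc0
    rw [h3, h4]
end

section
/- Let F be a cellular automaton and u a word of length n. Suppose all space-time diagrams generated by periodic initial configurations of the form (uv)^ℤ with |v| = n² have identical eventually-periodic parts. Then the consequences of u are eventually spatially uniform: there is T such that for every t ≥ T, all sites ⟨y,t⟩ in Cons_F([u]_0) carry the same state (for all configurations in [u]_0). -/
open Classical

/-- The spatially periodic configuration `u^ℤ`. -/
def perConf {A : Type*} [Inhabited A] (u : List A) : ℤ → A :=
  fun i => u.getD (i % (u.length : ℤ)).toNat default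

/-!
Choosing `v = u^n` and `v = a (u a)^(n-1)` turns `(u v)^ℤ` into `u^ℤ` and `(u a)^ℤ`. Since `F`
commutes with the shift, `F^t` preserves spatial periods, so for `t ≥ T₀` the configuration
`F^t (u^ℤ)` has periods `n` and `n + 1`, hence is constant. On a consequence site of `[u]_0`
every configuration of the cylinder agrees with `u^ℤ ∈ [u]_0`.
-/

section PeriodicConfigurations

variable {A : Type*}

theorem shift_iterate_apply (x : ℤ → A) (p : ℕ) (i : ℤ) : shift^[p] x i = x (i + p) := by
  induction p generalizing x with
  | zero => simp
  | succ p ih =>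
    rw [Function.iterate_succ_apply, ih]
    simp only [shift, Nat.cast_succ, add_assoc]

theorem Function.Periodic.iterate_of_commute_shift {F : (ℤ → A) → ℤ → A}
    (hF : Function.Commute F shift) {x : ℤ → A} {p : ℕ} (hx : Function.Periodic x p) (t : ℕ) :
    Function.Periodic (F^[t] x) p := by
  have hfix : shift^[p] x = x := funext fun i => (shift_iterate_apply x p i).trans (hx i)
  intro i
  rw [← shift_iterate_apply (F^[t] x), ← (hF.iterate_iterate t p) x, hfix]

theorem Function.Periodic.apply_eq_apply_zero_of_add_one {g : ℤ → A} {c : ℤ}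
    (hc : Function.Periodic g c) (hc' : Function.Periodic g (c + 1)) (y : ℤ) : g y = g 0 := by
  have h1 : Function.Periodic g 1 := by simpa using hc'.sub_period hc
  simpa using h1.int_mul y 0

theorem List.getD_flatten_replicate (w : List A) {k j : ℕ} (hj : j < k * w.length) (d : A) :
    (flatten (replicate k w)).getD j d = w.getD (j % w.length) d := by
  induction k generalizing j with
  | zero => simp at hj
  | succ k ih =>
    rw [replicate_succ, flatten_cons]
    by_cases h : j < w.length
    · rw [getD_append _ _ _ _ h, Nat.mod_eq_of_lt h]
    · push Not at h
      rw [getD_append_right _ _ _ _ h, ih (by rw [Nat.succ_mul] at hj; omega),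
        ← Nat.mod_eq_sub_mod h]

variable [Inhabited A]

theorem perConf_periodic (w : List A) : Function.Periodic (perConf w) w.length := by
  intro i
  simp [perConf]

theorem perConf_mem_cylAt (w : List A) : perConf w ∈ cylAt w 0 := by
  intro i
  have hi : ((i : ℕ) : ℤ) % w.length = (i : ℕ) := Int.emod_eq_of_lt (by omega) (by omega)
  simp [perConf, hi]

theorem perConf_flatten_replicate (w : List A) {k : ℕ} (hk : k ≠ 0) :
    perConf (List.flatten (List.replicate k w)) = perConf w := by
  rcases eq_or_ne w [] with rfl | hw
  · simp
  have hL : 0 < k * w.length := Nat.mul_pos (Nat.pos_of_ne_zero hk) (List.length_pos_iff.mpr hw)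
  funext i
  have hlen : (List.flatten (List.replicate k w)).length = k * w.length := by simp
  simp only [perConf, hlen]
  have hj : (i % ((k * w.length : ℕ) : ℤ)).toNat < k * w.length := by
    have := Int.emod_lt_of_pos i (Int.natCast_pos.mpr hL)
    omega
  rw [List.getD_flatten_replicate w hj]
  congr 1
  have hdvd : (w.length : ℤ) ∣ ((k * w.length : ℕ) : ℤ) := by push_cast; exact dvd_mul_left _ _
  have h0 := Int.emod_nonneg i (Int.natCast_pos.mpr hL).ne'
  rw [← Int.toNat_natCast (_ % _), Int.natCast_mod, Int.toNat_of_nonneg h0,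
    Int.emod_emod_of_dvd i hdvd]

end PeriodicConfigurations

theorem stmt13_general {A : Type*} [Inhabited A]
    (F : (ℤ → A) → (ℤ → A)) (r s : ℤ) (hF : IsCA F r s)
    (u : List A) (hu : u ≠ [])
    (hyp : ∃ T₀ : ℕ, ∀ v w : List A,
      v.length = u.length ^ 2 → w.length = u.length ^ 2 →
      ∀ t : ℕ, T₀ ≤ t → F^[t] (perConf (u ++ v)) = F^[t] (perConf (u ++ w))) :
    ∃ T : ℕ, ∀ t : ℕ, T ≤ t → ∃ a : A, ∀ c ∈ cylAt u 0, ∀ y : ℤ,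
      (y, t) ∈ consSet F (cylAt u 0) → F^[t] c y = a := by
  obtain ⟨T₀, hT⟩ := hyp
  obtain ⟨m, hn⟩ : ∃ m, u.length = m + 1 :=
    Nat.exists_eq_succ_of_ne_zero (List.length_pos_iff.mpr hu).ne'
  set b := u ++ [default]
  refine ⟨T₀, fun t ht => ⟨F^[t] (perConf u) 0, fun c hc y hy => ?_⟩⟩
  have hsame : F^[t] (perConf u) = F^[t] (perConf b) := by
    have h := hT (List.flatten (List.replicate u.length u))
      (default :: List.flatten (List.replicate m b)) (by simp [sq]) (by simp [b, hn]; ring) t ht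
    have e₁ : u ++ List.flatten (List.replicate u.length u) =
        List.flatten (List.replicate (u.length + 1) u) := by simp [List.replicate_succ]
    have e₂ : u ++ default :: List.flatten (List.replicate m b) =
        List.flatten (List.replicate (m + 1) b) := by simp [b, List.replicate_succ]
    rwa [e₁, e₂, perConf_flatten_replicate u (by omega),
      perConf_flatten_replicate b (by omega)] at h
  have hper : Function.Periodic (F^[t] (perConf u)) u.length :=
    (perConf_periodic u).iterate_of_commute_shift hF.1 t
  have hper' : Function.Periodic (F^[t] (perConf u)) (u.length + 1) := by
    rw [hsame]
    simpa [b] using (perConf_periodic b).iterate_of_commute_shift hF.1 t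
  rw [hy c hc _ (perConf_mem_cylAt u)]
  exact hper.apply_eq_apply_zero_of_add_one hper' y

/-- if all space-time diagrams of the periodic configurations
`(uv)^ℤ`, `|v| = n²`, have identical eventually-periodic parts, then the
consequences of `u` are eventually spatially uniform. -/
theorem stmt13 {A : Type*} [Fintype A] [Inhabited A]
    (F : (ℤ → A) → (ℤ → A)) (r s : ℤ) (hF : IsCA F r s)
    (u : List A) (hu : u ≠ [])
    (hyp : ∃ T₀ : ℕ, ∀ v w : List A,
      v.length = u.length ^ 2 → w.length = u.length ^ 2 →
      ∀ t : ℕ, T₀ ≤ t → F^[t] (perConf (u ++ v)) = F^[t] (perConf (u ++ w))) :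
    ∃ T : ℕ, ∀ t : ℕ, T ≤ t → ∃ a : A, ∀ c ∈ cylAt u 0, ∀ y : ℤ,
      (y, t) ∈ consSet F (cylAt u 0) → F^[t] c y = a :=
  stmt13_general F r s hF u hu hyp
end

section
/- Let F be a reversible cellular automaton, u a finite word, and suppose the set of positive consequences Cons_F^+([u]_0) ⊆ ℤ×ℕ contains a line D of rational slope, i.e., a set of sites {⟨x₀ + na, t₀ + nb⟩ : n ∈ ℕ} for integers a, b with b ≥ 1. Then the full bi-infinite line {⟨x₀ + na, t₀ + nb⟩ : n ∈ ℤ} is contained in the two-sided consequences Cons_F^±([u]_0) ⊆ ℤ×ℤ (negative times included). -/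
/-!
A spatially periodic configuration of a reversible CA over a finite alphabet lies in a finite
`F`-invariant set, so it is also periodic in time: its space-time diagram is biperiodic. By
locality, the value of `F^t x` at `c` only depends on `x` on a finite window, so to compare two
configurations of `[u]₀` at `⟨c, t⟩` we may replace them by periodic configurations that agree
with them on a large window. For biperiodic diagrams of space period `p` and time period `T`,
the site `⟨x₀ + n a, t₀ + n b⟩` (with `n ∈ ℤ`) carries the same value as the site with `n`
replaced by `n + |n| T p ∈ ℕ`, which lies on the positive half-line.
-/

open Classical

/-- Two-sided consequences of a set of configurations for a reversible CA with
inverse `G`. -/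
def consZ {A : Type*} (F G : (ℤ → A) → (ℤ → A)) (X : Set (ℤ → A)) : Set (ℤ × ℤ) :=
  {q | ∀ x ∈ X, ∀ y ∈ X,
    if 0 ≤ q.2 then F^[q.2.toNat] x q.1 = F^[q.2.toNat] y q.1
    else G^[(-q.2).toNat] x q.1 = G^[(-q.2).toNat] y q.1}

open Function

section CellularAutomata

variable {A : Type*} {F G : (ℤ → A) → (ℤ → A)}

lemma shift_iterate (n : ℕ) (x : ℤ → A) : shift^[n] x = fun i => x (i + n) := by
  induction n with
  | zero => simp
  | succ n ih =>
    funext i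
    rw [iterate_succ_apply', ih]
    exact congrArg x (by push_cast; ring)

lemma translate_comm_of_commute_shift (hF : Function.Commute F shift) (c : ℤ) (x : ℤ → A) :
    F (fun i => x (i + c)) = fun i => F x (i + c) := by
  have hnat (n : ℕ) (x : ℤ → A) : F (fun i => x (i + n)) = fun i => F x (i + n) := by
    rw [← shift_iterate, hF.iterate_right n x, shift_iterate]
  obtain ⟨n, rfl | rfl⟩ := Int.eq_nat_or_neg c
  · exact hnat n x
  · funext j
    have h := congrFun (hnat n fun i => x (i + -n)) (j + -n)
    simp only [add_neg_cancel_right, neg_add_cancel_right] at h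
    exact h.symm

lemma mapsTo_setOf_periodic (hF : Function.Commute F shift) (p : ℤ) :
    Set.MapsTo F {z | Periodic z p} {z | Periodic z p} := fun z hz i => by
  have h := congrFun (translate_comm_of_commute_shift hF p z) i
  rw [show (fun i => z (i + p)) = z from funext hz] at h
  exact h.symm

lemma finite_setOf_periodic [Finite A] {p : ℤ} (hp : 0 < p) :
    {z : ℤ → A | Periodic z p}.Finite := by
  refine Set.Finite.of_finite_image (f := fun z (i : Set.Ico 0 p) => z i) (Set.toFinite _) ?_
  intro z hz w hw hzw
  funext i
  have hmod (v : ℤ → A) (hv : Periodic v p) : v (toIcoMod hp 0 i) = v i := hv.sub_zsmul_eq _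
  rw [← hmod z hz, ← hmod w hw]
  exact congrFun hzw ⟨_, toIcoMod_mem_Ico' hp i⟩

lemma exists_iterate_eq_self_of_periodic [Finite A] (hF : Function.Commute F shift)
    (hinj : Injective F) {p : ℤ} (hp : 0 < p) :
    ∃ T, 0 < T ∧ ∀ z : ℤ → A, Periodic z p → F^[T] z = z := by
  have hP := mapsTo_setOf_periodic hF p
  have := (finite_setOf_periodic (A := A) hp).fintype
  refine ⟨(Fintype.card {z : ℤ → A | Periodic z p}).factorial, Nat.factorial_pos _, ?_⟩
  intro z hz
  have hid := injective_iff_iterate_factorial_card_eq_id.mp (hP.restrict_inj.mpr hinj.injOn)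
  have h := congrArg Subtype.val (congrFun hid ⟨z, hz⟩)
  rwa [hP.coe_iterate_restrict] at h

lemma exists_periodic_eqOn (x : ℤ → A) (N : ℕ) :
    ∃ x' : ℤ → A, Periodic x' (2 * N + 1 : ℤ) ∧ ∀ i : ℤ, |i| ≤ N → x' i = x i := by
  have hp : (0 : ℤ) < 2 * N + 1 := by omega
  refine ⟨x ∘ toIcoMod hp (-N), fun i => congrArg x (toIcoMod_add_right hp _ _),
    fun i hi => congrArg x ((toIcoMod_eq_self hp).2 ?_)⟩
  rw [abs_le] at hi
  constructor <;> omega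

namespace IsCA

variable {r s : ℤ}

lemma apply_eq_of_eqOn_s16 (hF : IsCA F r s) {x y : ℤ → A} {c : ℤ}
    (h : ∀ i, r ≤ i → i ≤ s → x (i + c) = y (i + c)) : F x c = F y c := by
  simpa [translate_comm_of_commute_shift hF.1] using hF.2 _ _ h

lemma iterate_apply_eq_of_eqOn (hF : IsCA F r s) (t : ℕ) {x y : ℤ → A} {c : ℤ}
    (h : ∀ i, |i - c| ≤ max |r| |s| * t → x i = y i) : F^[t] x c = F^[t] y c := by
  induction t generalizing x y with
  | zero => exact h c (by simp)
  | succ t ih =>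
    rw [iterate_succ_apply, iterate_succ_apply]
    refine ih fun i hi => hF.apply_eq_of_eqOn_s16 fun j hrj hjs => h _ ?_
    have hj : |j| ≤ max |r| |s| := abs_le_max_abs_abs hrj hjs
    calc |j + i - c| ≤ |j| + |i - c| := by simpa only [add_sub_assoc] using abs_add_le j (i - c)
      _ ≤ max |r| |s| * (t + 1 : ℕ) := by push_cast; linarith

end IsCA

def zIterate (F G : (ℤ → A) → (ℤ → A)) (t : ℤ) : (ℤ → A) → (ℤ → A) :=
  if 0 ≤ t then F^[t.toNat] else G^[(-t).toNat]

lemma mem_consZ_iff {X : Set (ℤ → A)} {q : ℤ × ℤ} :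
    q ∈ consZ F G X ↔ ∀ x ∈ X, ∀ y ∈ X, zIterate F G q.2 x q.1 = zIterate F G q.2 y q.1 := by
  unfold consZ zIterate
  simp only [Set.mem_ofPred_eq]
  split_ifs <;> rfl

lemma zIterate_apply_eq_of_eqOn {r s r' s' : ℤ} (hF : IsCA F r s) (hG : IsCA G r' s') (t : ℤ)
    {x y : ℤ → A} {c : ℤ}
    (h : ∀ i, |i - c| ≤ max (max |r| |s|) (max |r'| |s'|) * |t| → x i = y i) :
    zIterate F G t x c = zIterate F G t y c := by
  unfold zIterate
  split_ifs with ht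
  · refine hF.iterate_apply_eq_of_eqOn _ fun i hi => h i (hi.trans ?_)
    rw [Int.toNat_of_nonneg ht, abs_of_nonneg ht]
    exact mul_le_mul_of_nonneg_right (le_max_left _ _) ht
  · have ht' : 0 ≤ -t := by omega
    refine hG.iterate_apply_eq_of_eqOn _ fun i hi => h i (hi.trans ?_)
    rw [Int.toNat_of_nonneg ht', abs_of_neg (show t < 0 by omega)]
    exact mul_le_mul_of_nonneg_right (le_max_right _ _) ht'

lemma mem_consZ_of_periodic {r s r' s' : ℤ} (hF : IsCA F r s) (hG : IsCA G r' s')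
    {u : List A} {c t : ℤ}
    (h : ∀ p : ℕ, 0 < p → ∀ x ∈ cylAt u 0, ∀ y ∈ cylAt u 0, Periodic x p → Periodic y p →
      zIterate F G t x c = zIterate F G t y c) :
    (c, t) ∈ consZ F G (cylAt u 0) := by
  rw [mem_consZ_iff]
  intro x hx y hy
  set R := max (max |r| |s|) (max |r'| |s'|)
  set N : ℕ := (|c| + R * |t|).toNat + u.length
  have hN : |c| + R * |t| ≤ N ∧ (u.length : ℤ) ≤ N := by
    constructor <;> omega
  have hcyl (z z' : ℤ → A) (hz : z ∈ cylAt u 0) (hz' : ∀ i : ℤ, |i| ≤ N → z' i = z i) :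
      z' ∈ cylAt u 0 := fun i =>
    (hz' _ (abs_le.2 ⟨by omega, by have := i.isLt; omega⟩)).trans (hz i)
  have hcone (z z' : ℤ → A) (hz' : ∀ i : ℤ, |i| ≤ N → z' i = z i) :
      zIterate F G t z c = zIterate F G t z' c :=
    zIterate_apply_eq_of_eqOn hF hG t fun i hi => (hz' i (by
      have := abs_sub_abs_le_abs_sub i c
      linarith)).symm
  obtain ⟨x', hx'p, hx'⟩ := exists_periodic_eqOn x N
  obtain ⟨y', hy'p, hy'⟩ := exists_periodic_eqOn y N
  calc zIterate F G t x c = zIterate F G t x' c := hcone _ _ hx'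
    _ = zIterate F G t y' c :=
      h (2 * N + 1) (by omega) x' (hcyl _ _ hx hx') y' (hcyl _ _ hy hy') (by exact_mod_cast hx'p)
        (by exact_mod_cast hy'p)
    _ = zIterate F G t y c := (hcone _ _ hy').symm

lemma iterate_apply_eq_zIterate (hF : Function.Commute F shift) (hinv : LeftInverse G F)
    {z : ℤ → A} {p : ℤ} {T : ℕ} (hzp : Periodic z p) (hzT : F^[T] z = z) {t : ℤ} {e k : ℕ}
    (he : (e : ℤ) = t + k * T) (c j : ℤ) :
    F^[e] z (c + j * p) = zIterate F G t z c := by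
  rw [← smul_eq_mul, ((mapsTo_setOf_periodic hF p).iterate e hzp).zsmul j c]
  have hkT : F^[k * T] z = z := IsPeriodicPt.const_mul hzT k
  unfold zIterate
  split_ifs with ht
  · obtain rfl : e = t.toNat + k * T := by omega
    rw [iterate_add_apply, hkT]
  · have hsplit : k * T = (-t).toNat + e := by omega
    conv_rhs => rw [← hkT, hsplit, iterate_add_apply, hinv.iterate]

end CellularAutomata

theorem stmt16_general {A : Type*} [Fintype A]
    (F G : (ℤ → A) → (ℤ → A)) (r s r' s' : ℤ)
    (hF : IsCA F r s) (hG : IsCA G r' s')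
    (hinv₁ : Function.LeftInverse G F)
    (u : List A) (x₀ : ℤ) (t₀ : ℕ) (a : ℤ) (b : ℕ)
    (hline : ∀ n : ℕ, ((x₀ + (n : ℤ) * a, t₀ + n * b) : ℤ × ℕ) ∈
      consSet F (cylAt u 0)) :
    ∀ n : ℤ, ((x₀ + n * a, (t₀ : ℤ) + n * (b : ℤ)) : ℤ × ℤ) ∈
      consZ F G (cylAt u 0) := by
  intro n
  refine mem_consZ_of_periodic hF hG fun p hp x hx y hy hxp hyp => ?_
  obtain ⟨T, hT, hper⟩ := exists_iterate_eq_self_of_periodic hF.1 hinv₁.injective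
    (p := p) (by exact_mod_cast hp)
  obtain ⟨m, hm⟩ : ∃ m : ℕ, (m : ℤ) = n + n.natAbs * T * p := by
    have hTp : (1 : ℤ) ≤ T * p := by exact_mod_cast Nat.mul_pos hT hp
    have : (n.natAbs : ℤ) ≤ n.natAbs * T * p := by nlinarith
    exact ⟨_, Int.toNat_of_nonneg (by omega)⟩
  have hshift (z : ℤ → A) (hz : Periodic z p) :
      F^[t₀ + m * b] z (x₀ + m * a) = zIterate F G (t₀ + n * b) z (x₀ + n * a) := by
    rw [show x₀ + (m : ℤ) * a = x₀ + n * a + (n.natAbs * T * a) * p by rw [hm]; ring]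
    exact iterate_apply_eq_zIterate hF.1 hinv₁ hz (hper z hz) (k := n.natAbs * p * b)
      (by simp only [Nat.cast_add, Nat.cast_mul, hm]; ring) _ _
  rw [← hshift x hxp, ← hshift y hyp]
  exact hline m x hx y hy

/-- for a reversible CA, a rational-slope line contained in the
positive consequences of `u` extends to the full bi-infinite line in the
two-sided consequences. -/
theorem stmt16 {A : Type*} [Fintype A]
    (F G : (ℤ → A) → (ℤ → A)) (r s r' s' : ℤ)
    (hF : IsCA F r s) (hG : IsCA G r' s')
    (hinv₁ : Function.LeftInverse G F) (hinv₂ : Function.RightInverse G F)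
    (u : List A) (x₀ : ℤ) (t₀ : ℕ) (a : ℤ) (b : ℕ) (hb : 1 ≤ b)
    (hline : ∀ n : ℕ, ((x₀ + (n : ℤ) * a, t₀ + n * b) : ℤ × ℕ) ∈
      consSet F (cylAt u 0)) :
    ∀ n : ℤ, ((x₀ + n * a, (t₀ : ℤ) + n * (b : ℤ)) : ℤ × ℤ) ∈
      consZ F G (cylAt u 0) :=
  stmt16_general F G r s r' s' hF hG hinv₁ u x₀ t₀ a b hline
end

section
/- For any two cellular automata G on A_G^ℤ and H on A_H^ℤ, a bounded-variation curve h admits equicontinuous points for the product automaton G×H on (A_G×A_H)^ℤ if and only if h admits equicontinuous points for both G and H; that is, A_ℕ(G×H) = A_ℕ(G) ∩ A_ℕ(H). -/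
open Classical

/-- The product cellular automaton. -/
def prodCA {A B : Type*} (F : (ℤ → A) → (ℤ → A)) (G : (ℤ → B) → (ℤ → B)) :
    (ℤ → A × B) → (ℤ → A × B) :=
  fun x i => (F (fun j => (x j).1) i, G (fun j => (x j).2) i)

/-- a bounded-variation curve admits equicontinuous points for the
product CA `G × H` iff it does for both factors. -/
theorem stmt17 {A B : Type*} [Fintype A] [Fintype B]
    (F : (ℤ → A) → (ℤ → A)) (G : (ℤ → B) → (ℤ → B))
    (r s r' s' : ℤ) (hF : IsCA F r s) (hG : IsCA G r' s')
    (h : ℕ → ℤ) (hh : BV h) :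
    (∃ x : ℤ → A × B, eqPt (prodCA F G) Set.univ h x) ↔
      ((∃ x : ℤ → A, eqPt F Set.univ h x) ∧ (∃ y : ℤ → B, eqPt G Set.univ h y)) := by
  have iter : ∀ n (z : ℤ → A × B), (prodCA F G)^[n] z =
      fun i => (F^[n] (fun j => (z j).1) i, G^[n] (fun j => (z j).2) i) := by
    intro n
    induction n with
    | zero => intro z; rfl
    | succ n ih =>
      intro z
      rw [Function.iterate_succ_apply, ih]
      funext i
      simp only [Function.iterate_succ_apply]
      rfl
  constructor
  · rintro ⟨x, hx⟩
    constructor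
    · refine ⟨fun j => (x j).1, fun k => ?_⟩
      obtain ⟨m, hm⟩ := hx k
      refine ⟨m, fun y _ hcl n i hi => ?_⟩
      have := hm (fun j => (y j, (x j).2)) (Set.mem_univ _)
        (fun i hi => by
          have := hcl i hi
          exact Prod.ext this rfl) n i hi
      rw [iter, iter] at this
      exact congrArg Prod.fst this
    · refine ⟨fun j => (x j).2, fun k => ?_⟩
      obtain ⟨m, hm⟩ := hx k
      refine ⟨m, fun y _ hcl n i hi => ?_⟩
      have := hm (fun j => ((x j).1, y j)) (Set.mem_univ _)
        (fun i hi => by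
          have := hcl i hi
          exact Prod.ext rfl this) n i hi
      rw [iter, iter] at this
      exact congrArg Prod.snd this
  · rintro ⟨⟨x, hx⟩, ⟨y, hy⟩⟩
    refine ⟨fun j => (x j, y j), fun k => ?_⟩
    obtain ⟨m1, hm1⟩ := hx k
    obtain ⟨m2, hm2⟩ := hy k
    refine ⟨max m1 m2, fun z _ hcl n i hi => ?_⟩
    have h1 : F^[n] x (i + h n) = F^[n] (fun j => (z j).1) (i + h n) :=
      hm1 (fun j => (z j).1) (Set.mem_univ _)
        (fun i hi => congrArg Prod.fst (hcl i (le_trans hi (by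
          exact_mod_cast le_max_left m1 m2)))) n i hi
    have h2 : G^[n] y (i + h n) = G^[n] (fun j => (z j).2) (i + h n) :=
      hm2 (fun j => (z j).2) (Set.mem_univ _)
        (fun i hi => congrArg Prod.snd (hcl i (le_trans hi (by
          exact_mod_cast le_max_right m1 m2)))) n i hi
    rw [iter, iter]
    exact Prod.ext h1 h2
end
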